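/- Let f ∈ C^{k+1}(ℝ) be compactly supported and u ∈ ℝ. Then f(u) = (1/π) ∫_ℂ ∂̄F_k(f)(z) (u − z)^{-1} d²z, where F_k(f) is the almost analytic extension of f of order k. -/

import Mathlib

open Complex MeasureTheory

/-- The order-`k` almost analytic extension
`F_k(f)(x+iy) = Σ_{l=0}^{k} ((iy)^l / l!) f^{(l)}(x) χ(y)`, viewed as a function of the
two real variables `x, y`. -/
noncomputable def almostAnalyticExt (k : ℕ) (χ f : ℝ → ℝ) (x y : ℝ) : ℂ :=
  (∑ l ∈ Finset.range (k + 1),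
      (Complex.I * (y : ℂ)) ^ l / (Nat.factorial l : ℂ) * Complex.ofReal (iteratedDeriv l f x)) *
    (χ y : ℂ)

/-- The operator `∂̄ = (1/2)(∂_x + i ∂_y)` applied to a function of two real variables. -/
noncomputable def dbar (F : ℝ → ℝ → ℂ) (x y : ℝ) : ℂ :=
  (1 / 2 : ℂ) * (deriv (fun t => F t y) x + Complex.I * deriv (fun s => F x s) y)

section HelfferSjostrandAux

open Set

private lemma hs_key_identity (L : ℂ →L[ℝ] ℂ) (θ : ℝ) :
    (1/2 : ℂ) * (L 1 + I * L I) * (Real.cos θ - Real.sin θ * I)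
      = (1/2 : ℂ) * (L (Real.cos θ + Real.sin θ * I))
        + (1/2 : ℂ) * (I * L ((Real.cos θ + Real.sin θ * I) * I)) := by
  have e1 : L ((Real.cos θ : ℂ) + Real.sin θ * I)
      = (Real.cos θ : ℂ) * L 1 + (Real.sin θ : ℂ) * L I := by
    rw [show ((Real.cos θ : ℂ) + Real.sin θ * I) = (Real.cos θ) • (1:ℂ) + (Real.sin θ) • I by
      simp [Complex.real_smul], map_add, ContinuousLinearMap.map_smul,
      ContinuousLinearMap.map_smul]
    simp [Complex.real_smul]
  have e2 : L (((Real.cos θ : ℂ) + Real.sin θ * I) * I)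
      = -((Real.sin θ : ℂ) * L 1) + (Real.cos θ : ℂ) * L I := by
    rw [show (((Real.cos θ : ℂ) + Real.sin θ * I) * I) = (-Real.sin θ) • (1:ℂ) + (Real.cos θ) • I
        by push_cast; ring_nf; simp [Complex.real_smul, I_sq]; ring,
      map_add, ContinuousLinearMap.map_smul, ContinuousLinearMap.map_smul]
    simp [Complex.real_smul]
  rw [e1, e2]; ring_nf; rw [I_sq]; ring

private lemma hs_hasDerivAt_radial (H : ℂ → ℂ) (L : ℂ →L[ℝ] ℂ) (w e : ℂ) (r : ℝ)
    (hL : HasFDerivAt H L (w + r * e)) :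
    HasDerivAt (fun r : ℝ => H (w + r * e)) (L e) r := by
  have h1 : HasDerivAt (fun r : ℝ => (w + r * e : ℂ)) e r := by
    simpa using ((Complex.ofRealCLM.hasDerivAt (x := r)).mul_const e).const_add w
  simpa [Function.comp_def] using hL.comp_hasDerivAt r h1

private lemma hs_hasDerivAt_angular (H : ℂ → ℂ) (L : ℂ →L[ℝ] ℂ) (w : ℂ) (r θ : ℝ)
    (hL : HasFDerivAt H L (w + r * Complex.exp (θ * I))) :
    HasDerivAt (fun θ : ℝ => H (w + r * Complex.exp (θ * I)))
      (r * L (Complex.exp (θ * I) * I)) θ := by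
  have h1 : HasDerivAt (fun θ : ℝ => (w + r * Complex.exp (θ * I) : ℂ))
      ((r : ℝ) • (Complex.exp (θ * I) * I)) θ := by
    have h0 : HasDerivAt (fun θ : ℝ => ((θ : ℂ) * I)) I θ := by
      simpa using (Complex.ofRealCLM.hasDerivAt (x := θ)).mul_const I
    simpa [mul_assoc, Complex.real_smul] using ((h0.cexp).const_mul (r:ℂ)).const_add w
  have h2 := hL.comp_hasDerivAt θ h1
  rw [L.map_smul] at h2
  simpa [Complex.real_smul, Function.comp_def] using h2

private lemma hs_isometry_radial (w : ℂ) (θ : ℝ) :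
    Isometry (fun r : ℝ => w + r * Complex.exp (θ * I)) := by
  intro r r'
  simp only [edist_dist, Complex.dist_eq, Real.dist_eq]
  congr 1
  have : (w + r * Complex.exp (θ * I)) - (w + r' * Complex.exp (θ * I))
      = ((r : ℂ) - r') * Complex.exp (θ * I) := by ring
  rw [this, norm_mul, Complex.norm_exp_ofReal_mul_I, mul_one, ← Complex.ofReal_sub, Complex.norm_real,
    Real.norm_eq_abs]

private lemma hs_integrableOn_aux (A : ℝ × ℝ → ℂ) (hAcont : Continuous A) (M : ℝ) (hM0 : 0 ≤ M)
    (hA0 : ∀ p : ℝ × ℝ, M ≤ p.1 → A p = 0) :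
    IntegrableOn A (Ioi (0:ℝ) ×ˢ Ioo (-Real.pi) Real.pi) := by
  have hK : IsCompact (Icc (0:ℝ) M ×ˢ Icc (-Real.pi) Real.pi) := isCompact_Icc.prod isCompact_Icc
  have h1 : IntegrableOn A (Ioc (0:ℝ) M ×ˢ Ioo (-Real.pi) Real.pi) :=
    (hAcont.continuousOn.integrableOn_compact hK).mono_set
      (prod_mono Ioc_subset_Icc_self Ioo_subset_Icc_self)
  have h2 : IntegrableOn A (Ioi M ×ˢ Ioo (-Real.pi) Real.pi) := by
    refine (integrableOn_zero (ε' := ℂ)).congr_fun ?_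
      ((measurableSet_Ioi).prod measurableSet_Ioo)
    exact fun p hp => (hA0 p (le_of_lt hp.1)).symm
  have : Ioi (0:ℝ) ×ˢ Ioo (-Real.pi) Real.pi
      = (Ioc (0:ℝ) M ×ˢ Ioo (-Real.pi) Real.pi) ∪ (Ioi M ×ˢ Ioo (-Real.pi) Real.pi) := by
    rw [← union_prod, Ioc_union_Ioi_eq_Ioi hM0]
  rw [this]
  exact h1.union h2


private theorem hs_cauchy_pompeiu (H : ℂ → ℂ) (hH : ContDiff ℝ 1 H) (hsupp : HasCompactSupport H) (w : ℂ) :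
    (∫ z : ℂ, (1/2 : ℂ) * ((fderiv ℝ H z) 1 + I * (fderiv ℝ H z) I) * (w - z)⁻¹)
      = Real.pi * H w := by
  have pi_pos := Real.pi_pos
  set L : ℂ → ℂ →L[ℝ] ℂ := fderiv ℝ H with hLdef
  have hdiff : Differentiable ℝ H := hH.differentiable one_ne_zero
  have hLd : ∀ z, HasFDerivAt H (L z) z := fun z => (hdiff z).hasFDerivAt
  have hLcont : Continuous L := hH.continuous_fderiv one_ne_zero
  have hLsupp : HasCompactSupport L := hsupp.fderiv (𝕜 := ℝ)
  obtain ⟨R, hR0, hR⟩ := hsupp.isBounded.subset_closedBall_lt 0 0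
  have hH0 : ∀ z : ℂ, R < ‖z‖ → H z = 0 := by
    intro z hz
    apply image_eq_zero_of_notMem_tsupport
    intro hmem
    have := hR hmem
    simp only [Metric.mem_closedBall, Complex.dist_eq, sub_zero] at this
    exact absurd this (by linarith)
  have hL0 : ∀ z : ℂ, R < ‖z‖ → L z = 0 := by
    intro z hz
    apply image_eq_zero_of_notMem_tsupport
    intro hmem
    have hsub : tsupport L ⊆ tsupport H := tsupport_fderiv_subset ℝ
    have := hR (hsub hmem)
    simp only [Metric.mem_closedBall, Complex.dist_eq, sub_zero] at this
    exact absurd this (by linarith)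
  set M : ℝ := R + ‖w‖ + 1 with hMdef
  have hM0 : (0:ℝ) ≤ M := by positivity
  set E : ℝ × ℝ → ℂ := fun p => w + p.1 * Complex.exp (p.2 * I) with hEdef
  have hecont : Continuous (fun p : ℝ × ℝ => Complex.exp (p.2 * I)) :=
    Complex.continuous_exp.comp ((Complex.continuous_ofReal.comp continuous_snd).mul
      continuous_const)
  have hEcont : Continuous E := by
    apply continuous_const.add
    exact (Complex.continuous_ofReal.comp continuous_fst).mul hecont
  have hEnorm : ∀ p : ℝ × ℝ, M ≤ p.1 → R < ‖E p‖ := by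
    intro p hp
    have h1 : ‖(p.1 : ℂ) * Complex.exp (p.2 * I)‖ = |p.1| := by
      simp [Complex.norm_exp_ofReal_mul_I]
    have h2 : ‖E p‖ ≥ ‖(p.1 : ℂ) * Complex.exp (p.2 * I)‖ - ‖w‖ := by
      have := norm_sub_norm_le ((p.1 : ℂ) * Complex.exp (p.2 * I)) (-w)
      simp only [norm_neg] at this
      calc ‖(p.1:ℂ) * Complex.exp (p.2 * I)‖ - ‖w‖ ≤ ‖(p.1:ℂ) * Complex.exp (p.2*I) - -w‖ := this
        _ = ‖E p‖ := by rw [hEdef]; ring_nf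
    rw [h1] at h2
    have : |p.1| ≥ M := le_trans hp (le_abs_self p.1)
    simp only [hMdef] at this
    linarith
  set D : ℂ → ℂ := fun z => (1/2 : ℂ) * ((L z) 1 + I * (L z) I) with hDdef
  set A : ℝ × ℝ → ℂ := fun p => -((1/2 : ℂ) * (L (E p)) (Complex.exp (p.2 * I))) with hAdef
  set B : ℝ × ℝ → ℂ :=
    fun p => -((1/2 : ℂ) * (I * (L (E p)) (Complex.exp (p.2 * I) * I))) with hBdef
  set Q : ℝ × ℝ → ℂ := fun p => -(D (E p) * Complex.exp (-p.2 * I)) with hQdef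
  have hQAB : Q = fun p => A p + B p := by
    funext p
    rw [hQdef, hAdef, hBdef]
    simp only
    have hexp : Complex.exp ((p.2 : ℂ) * I) = Real.cos p.2 + Real.sin p.2 * I := by
      rw [Complex.exp_mul_I]; push_cast; ring
    have hexp' : Complex.exp (-(p.2 : ℂ) * I) = Real.cos p.2 - Real.sin p.2 * I := by
      rw [show (-(p.2:ℂ)) * I = ((-p.2 : ℝ) : ℂ) * I by push_cast; ring, Complex.exp_mul_I]
      push_cast
      rw [Complex.cos_neg, Complex.sin_neg]
      ring
    rw [hexp, hexp', hDdef]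
    simp only
    rw [hs_key_identity (L (E p)) p.2]
    ring
  -- continuity and vanishing for A and B
  have hAcont : Continuous A := by
    apply Continuous.neg
    apply Continuous.mul continuous_const
    exact (hLcont.comp hEcont).clm_apply hecont
  have hBcont : Continuous B := by
    apply Continuous.neg
    apply Continuous.mul continuous_const
    apply Continuous.mul continuous_const
    exact (hLcont.comp hEcont).clm_apply (hecont.mul continuous_const)
  have hA0 : ∀ p : ℝ × ℝ, M ≤ p.1 → A p = 0 := by
    intro p hp; rw [hAdef]; simp [hL0 _ (hEnorm p hp)]
  have hB0 : ∀ p : ℝ × ℝ, M ≤ p.1 → B p = 0 := by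
    intro p hp; rw [hBdef]; simp [hL0 _ (hEnorm p hp)]
  have hAint : IntegrableOn A (Ioi (0:ℝ) ×ˢ Ioo (-Real.pi) Real.pi) :=
    hs_integrableOn_aux A hAcont M hM0 hA0
  have hBint : IntegrableOn B (Ioi (0:ℝ) ×ˢ Ioo (-Real.pi) Real.pi) :=
    hs_integrableOn_aux B hBcont M hM0 hB0
  -- main calc
  have step1 : (∫ z : ℂ, D z * (w - z)⁻¹) = ∫ z : ℂ, D (w + z) * (-z)⁻¹ := by
    rw [← integral_add_left_eq_self (fun z : ℂ => D z * (w - z)⁻¹) w]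
    congr 1; funext z; congr 2; ring
  have step2 : (∫ z : ℂ, D (w + z) * (-z)⁻¹)
      = ∫ p in Ioi (0:ℝ) ×ˢ Ioo (-Real.pi) Real.pi, Q p := by
    rw [← Complex.integral_comp_polarCoord_symm (fun z => D (w + z) * (-z)⁻¹), polarCoord_target]
    apply setIntegral_congr_fun (measurableSet_Ioi.prod measurableSet_Ioo)
    intro p hp
    have hp1 : 0 < p.1 := hp.1
    have hp1' : (p.1 : ℂ) ≠ 0 := by exact_mod_cast ne_of_gt hp1
    have hpc : Complex.polarCoord.symm p = p.1 * Complex.exp (p.2 * I) := by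
      rw [Complex.polarCoord_symm_apply, Complex.exp_mul_I]
      push_cast; ring
    simp only [hpc, hQdef, hEdef]
    have hexp : Complex.exp ((p.2 : ℂ) * I) ≠ 0 := Complex.exp_ne_zero _
    rw [Complex.real_smul, show (-(p.2:ℂ)) * I = -((p.2:ℂ) * I) by ring, Complex.exp_neg]
    field_simp
  have step3 : (∫ p in Ioi (0:ℝ) ×ˢ Ioo (-Real.pi) Real.pi, Q p)
      = (∫ p in Ioi (0:ℝ) ×ˢ Ioo (-Real.pi) Real.pi, A p)
        + ∫ p in Ioi (0:ℝ) ×ˢ Ioo (-Real.pi) Real.pi, B p := by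
    rw [hQAB]
    exact integral_add hAint hBint
  -- the A part
  have stepA : (∫ p in Ioi (0:ℝ) ×ˢ Ioo (-Real.pi) Real.pi, A p) = Real.pi * H w := by
    have hswap : (∫ p in Ioi (0:ℝ) ×ˢ Ioo (-Real.pi) Real.pi, A p)
        = ∫ θ in Ioo (-Real.pi) Real.pi, ∫ r in Ioi (0:ℝ), A (r, θ) := by
      rw [Measure.volume_eq_prod, ← Measure.prod_restrict]
      refine integral_prod_symm A ?_
      rwa [Measure.prod_restrict, ← Measure.volume_eq_prod]
    rw [hswap]
    have hinner : ∀ θ : ℝ, (∫ r in Ioi (0:ℝ), A (r, θ)) = (1/2 : ℂ) * H w := by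
      intro θ
      set e : ℂ := Complex.exp (θ * I) with he
      set ψ : ℝ → ℂ := fun r => -((1/2 : ℂ) * H (w + r * e)) with hψ
      have hder : ∀ r ∈ Ici (0:ℝ), HasDerivAt ψ (A (r, θ)) r := by
        intro r _
        have h := (hs_hasDerivAt_radial H (L _) w e r (hLd _)).const_mul (-(1/2 : ℂ))
        convert h using 1
        · rfl
        · funext s; rw [hψ]; ring_nf
        · rw [hAdef, hEdef]; simp only; ring
      have hA1cont : Continuous (fun r : ℝ => A (r, θ)) :=
        hAcont.comp (continuous_id.prodMk continuous_const)
      have hA1supp : HasCompactSupport (fun r : ℝ => A (r, θ)) := by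
        have hg : HasCompactSupport (fun z => -((1/2 : ℂ) * (L z) e)) :=
          hLsupp.comp_left (g := fun T : ℂ →L[ℝ] ℂ => -((1/2:ℂ) * T e)) (by simp)
        exact hg.comp_isClosedEmbedding (hs_isometry_radial w θ).isClosedEmbedding
      have hint : IntegrableOn (fun r : ℝ => A (r, θ)) (Ioi (0:ℝ)) :=
        (hA1cont.integrable_of_hasCompactSupport hA1supp).integrableOn
      have htend : Filter.Tendsto ψ Filter.atTop (nhds 0) := by
        apply Filter.Tendsto.congr' _ tendsto_const_nhds
        filter_upwards [Filter.eventually_ge_atTop M] with r hr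
        have : H (w + r * e) = 0 := hH0 _ (hEnorm (r, θ) hr)
        rw [hψ]; simp [this]
      have := integral_Ioi_of_hasDerivAt_of_tendsto' hder hint htend
      rw [this, hψ]
      norm_num
    have : (∫ θ in Ioo (-Real.pi) Real.pi, ∫ r in Ioi (0:ℝ), A (r, θ))
        = ∫ _ in Ioo (-Real.pi) Real.pi, (1/2 : ℂ) * H w := by
      apply setIntegral_congr_fun measurableSet_Ioo
      intro θ _; exact hinner θ
    rw [this, setIntegral_const, Real.volume_real_Ioo_of_le (by linarith)]
    rw [Complex.real_smul]
    push_cast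
    ring
  -- the B part
  have stepB : (∫ p in Ioi (0:ℝ) ×ˢ Ioo (-Real.pi) Real.pi, B p) = 0 := by
    have hswap : (∫ p in Ioi (0:ℝ) ×ˢ Ioo (-Real.pi) Real.pi, B p)
        = ∫ r in Ioi (0:ℝ), ∫ θ in Ioo (-Real.pi) Real.pi, B (r, θ) := by
      rw [Measure.volume_eq_prod, ← Measure.prod_restrict]
      refine integral_prod B ?_
      rwa [Measure.prod_restrict, ← Measure.volume_eq_prod]
    rw [hswap]
    have hinner : ∀ r ∈ Ioi (0:ℝ), (∫ θ in Ioo (-Real.pi) Real.pi, B (r, θ)) = 0 := by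
      intro r hr
      have hrpos : (0:ℝ) < r := hr
      have hr' : (r : ℂ) ≠ 0 := by exact_mod_cast ne_of_gt hrpos
      set φ : ℝ → ℂ :=
        fun θ => (-(1/2 : ℂ) * I * (r:ℂ)⁻¹) * H (w + r * Complex.exp (θ * I)) with hφ
      have hder : ∀ θ ∈ uIcc (-Real.pi) Real.pi, HasDerivAt φ (B (r, θ)) θ := by
        intro θ _
        have h := (hs_hasDerivAt_angular H (L _) w r θ (hLd _)).const_mul (-(1/2 : ℂ) * I * (r:ℂ)⁻¹)
        convert h using 1
        · rfl
        rw [hBdef, hEdef]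
        simp only
        field_simp
      have hB1cont : Continuous (fun θ : ℝ => B (r, θ)) :=
        hBcont.comp (continuous_const.prodMk continuous_id)
      have hint : IntervalIntegrable (fun θ : ℝ => B (r, θ)) volume (-Real.pi) Real.pi :=
        hB1cont.intervalIntegrable _ _
      have hFTC := intervalIntegral.integral_eq_sub_of_hasDerivAt hder hint
      rw [← integral_Ioc_eq_integral_Ioo, ← intervalIntegral.integral_of_le (by linarith), hFTC,
        hφ]
      have h1 : Complex.exp ((Real.pi : ℂ) * I) = -1 := Complex.exp_pi_mul_I
      have h2 : Complex.exp (((-Real.pi : ℝ) : ℂ) * I) = -1 := by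
        push_cast
        rw [neg_mul, Complex.exp_neg, Complex.exp_pi_mul_I]
        norm_num
      simp only [h1, h2]
      ring
    rw [setIntegral_congr_fun measurableSet_Ioi hinner]
    simp
  rw [show (fun z => (1/2 : ℂ) * ((fderiv ℝ H z) 1 + I * (fderiv ℝ H z) I) * (w - z)⁻¹)
      = fun z => D z * (w - z)⁻¹ from rfl]
  rw [step1, step2, step3, stepA, stepB, add_zero]

private lemma hs_tsupport_iteratedDeriv (f : ℝ → ℝ) (l : ℕ) :
    tsupport (iteratedDeriv l f) ⊆ tsupport f := by
  induction l with
  | zero => simp [iteratedDeriv_zero]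
  | succ n ih =>
    rw [iteratedDeriv_succ]
    exact (closure_minimal (support_deriv_subset) isClosed_closure).trans ih

end HelfferSjostrandAux

/-- **Helffer–Sjöstrand representation formula.**
Let `f ∈ C^{k+1}(ℝ)` be compactly supported and `u ∈ ℝ`.  Then
`f(u) = (1/π) ∫_ℂ ∂̄F_k(f)(z) (u − z)⁻¹ d²z`, where `F_k(f)` is the almost analytic
extension of `f` of order `k` (built from a smooth cutoff `χ` with compact support which
equals `1` near `0`), and the integral over `ℂ` is with respect to Lebesgue measure
`d²z` on `ℝ²`, `z = x + iy`. -/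
theorem helffer_sjostrand (k : ℕ) (χ f : ℝ → ℝ)
    (hχ : ContDiff ℝ (⊤ : ℕ∞) χ) (hχsupp : HasCompactSupport χ)
    (ε : ℝ) (hε : 0 < ε) (hχ1 : ∀ y : ℝ, |y| < ε → χ y = 1)
    (hf : ContDiff ℝ (k + 1) f) (hfsupp : HasCompactSupport f) (u : ℝ) :
    (f u : ℂ) = (1 / Real.pi : ℂ) *
      ∫ z : ℝ × ℝ, dbar (almostAnalyticExt k χ f) z.1 z.2 *
        ((u : ℂ) - (z.1 + z.2 * Complex.I))⁻¹ := by
  set H : ℂ → ℂ := fun z : ℂ => almostAnalyticExt k χ f z.re z.im with hHdef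
  -- smoothness of the iterated derivatives
  have hdl : ∀ l ≤ k, ContDiff ℝ 1 (iteratedDeriv l f) := by
    intro l hl
    have hf' : ContDiff ℝ ((k + 1 : ℕ)) f := by exact_mod_cast hf
    obtain ⟨hc, hd⟩ := contDiff_nat_iff_iteratedDeriv.1 hf'
    refine contDiff_one_iff_deriv.2 ⟨hd l (by omega), ?_⟩
    rw [← iteratedDeriv_succ]
    exact hc (l + 1) (by omega)
  -- smoothness of H
  have hH : ContDiff ℝ 1 H := by
    rw [hHdef]
    unfold almostAnalyticExt
    apply ContDiff.mul
    · apply ContDiff.sum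
      intro l hl
      apply ContDiff.mul
      · apply ContDiff.div_const
        exact (contDiff_const.mul (Complex.ofRealCLM.contDiff.comp Complex.imCLM.contDiff)).pow l
      · exact Complex.ofRealCLM.contDiff.comp
          ((hdl l (by simpa [Finset.mem_range, Nat.lt_succ_iff] using hl)).comp
            Complex.reCLM.contDiff)
    · exact Complex.ofRealCLM.contDiff.comp ((hχ.of_le (by simp)).comp Complex.imCLM.contDiff)
  -- compact support of H
  have hsupp : HasCompactSupport H := by
    rw [hasCompactSupport_def]
    have hsub : Function.support H
        ⊆ {z : ℂ | z.re ∈ tsupport f ∧ z.im ∈ tsupport χ} := by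
      intro z hz
      simp only [Function.mem_support, hHdef] at hz
      unfold almostAnalyticExt at hz
      have h1 : (χ z.im : ℂ) ≠ 0 := fun h => hz (by rw [h, mul_zero])
      have h2 : ∃ l ∈ Finset.range (k+1),
          (Complex.I * (z.im : ℂ)) ^ l / (Nat.factorial l : ℂ)
            * Complex.ofReal (iteratedDeriv l f z.re) ≠ 0 := by
        by_contra hcon
        push_neg at hcon
        exact hz (by rw [Finset.sum_eq_zero hcon, zero_mul])
      obtain ⟨l, _, hl⟩ := h2
      constructor
      · apply hs_tsupport_iteratedDeriv f l
        apply subset_tsupport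
        intro h0
        exact hl (by rw [h0]; simp)
      · apply subset_tsupport
        intro h0
        exact h1 (by rw [h0]; simp)
    refine IsCompact.of_isClosed_subset ?_ isClosed_closure (closure_minimal hsub ?_)
    · obtain ⟨Rf, hRf⟩ := hfsupp.isBounded.subset_closedBall 0
      obtain ⟨Rχ, hRχ⟩ := hχsupp.isBounded.subset_closedBall 0
      apply Metric.isCompact_of_isClosed_isBounded
      · exact (isClosed_tsupport f).preimage Complex.continuous_re |>.inter
          ((isClosed_tsupport χ).preimage Complex.continuous_im)
      · rw [Metric.isBounded_iff_subset_closedBall 0]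
        refine ⟨|Rf| + |Rχ|, fun z hz => ?_⟩
        obtain ⟨h1, h2⟩ := hz
        have b1 : |z.re| ≤ |Rf| := by
          have := hRf h1; simp [Real.dist_eq] at this; exact this.trans (le_abs_self _)
        have b2 : |z.im| ≤ |Rχ| := by
          have := hRχ h2; simp [Real.dist_eq] at this; exact this.trans (le_abs_self _)
        simp only [Metric.mem_closedBall, Complex.dist_eq, sub_zero]
        calc ‖z‖ ≤ |z.re| + |z.im| := Complex.norm_le_abs_re_add_abs_im z
          _ ≤ |Rf| + |Rχ| := add_le_add b1 b2
    · exact ((isClosed_tsupport f).preimage Complex.continuous_re).inter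
        ((isClosed_tsupport χ).preimage Complex.continuous_im)
  have hdiff : Differentiable ℝ H := hH.differentiable one_ne_zero
  -- identification of dbar with the complex derivative combination
  have hdbar : ∀ x y : ℝ, dbar (almostAnalyticExt k χ f) x y
      = (1/2 : ℂ) * ((fderiv ℝ H ((x:ℂ) + y * Complex.I)) 1
          + Complex.I * (fderiv ℝ H ((x:ℂ) + y * Complex.I)) Complex.I) := by
    intro x y
    have hGH : ∀ a b : ℝ, H ((a:ℂ) + b * Complex.I) = almostAnalyticExt k χ f a b := by
      intro a b; rw [hHdef]; simp
    set z : ℂ := (x:ℂ) + y * Complex.I with hz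
    have hL := (hdiff z).hasFDerivAt
    have h1 : HasDerivAt (fun t : ℝ => H ((t:ℂ) + y * Complex.I)) ((fderiv ℝ H z) 1) x := by
      have hin : HasDerivAt (fun t : ℝ => ((t:ℂ) + y * Complex.I)) 1 x := by
        simpa using (Complex.ofRealCLM.hasDerivAt (x := x)).add_const ((y:ℂ) * Complex.I)
      simpa [Function.comp_def] using hL.comp_hasDerivAt x hin
    have h2 : HasDerivAt (fun s : ℝ => H ((x:ℂ) + s * Complex.I))
        ((fderiv ℝ H z) Complex.I) y := by
      have hin : HasDerivAt (fun s : ℝ => ((x:ℂ) + s * Complex.I)) Complex.I y := by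
        simpa using ((Complex.ofRealCLM.hasDerivAt (x := y)).mul_const Complex.I).const_add (x:ℂ)
      simpa [Function.comp_def] using hL.comp_hasDerivAt y hin
    unfold dbar
    rw [show (fun t => almostAnalyticExt k χ f t y) = fun t : ℝ => H ((t:ℂ) + y * Complex.I) by
        funext t; rw [hGH],
      show (fun s => almostAnalyticExt k χ f x s) = fun s : ℝ => H ((x:ℂ) + s * Complex.I) by
        funext s; rw [hGH],
      h1.deriv, h2.deriv]
  -- value of H at the real point u
  have hHu : H (u : ℂ) = (f u : ℂ) := by
    rw [hHdef]
    simp only [Complex.ofReal_re, Complex.ofReal_im]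
    unfold almostAnalyticExt
    rw [hχ1 0 (by simpa using hε)]
    rw [Finset.sum_eq_single_of_mem 0 (Finset.mem_range.2 (by omega))]
    · simp
    · intro l _ hl
      simp [zero_pow hl]
  -- transfer the integral from ℝ × ℝ to ℂ
  have htrans : (∫ z : ℝ × ℝ, dbar (almostAnalyticExt k χ f) z.1 z.2 *
        ((u : ℂ) - (z.1 + z.2 * Complex.I))⁻¹)
      = ∫ z : ℂ, (1/2 : ℂ) * ((fderiv ℝ H z) 1 + Complex.I * (fderiv ℝ H z) Complex.I)
          * ((u : ℂ) - z)⁻¹ := by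
    rw [← Complex.volume_preserving_equiv_real_prod.integral_comp
      Complex.measurableEquivRealProd.measurableEmbedding
      (fun p : ℝ × ℝ => dbar (almostAnalyticExt k χ f) p.1 p.2 *
        ((u : ℂ) - (p.1 + p.2 * Complex.I))⁻¹)]
    congr 1
    funext z
    show dbar (almostAnalyticExt k χ f) z.re z.im * ((u : ℂ) - (z.re + z.im * Complex.I))⁻¹ = _
    rw [hdbar z.re z.im, Complex.re_add_im]
  have key := hs_cauchy_pompeiu H hH hsupp (u : ℂ)
  rw [htrans, key, hHu]
  have hπ : (Real.pi : ℂ) ≠ 0 := by exact_mod_cast Real.pi_ne_zero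
  field_simp
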